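/- Let (βₙ) be a sequence of subprobability measures on ℝ^d that totally disintegrates, i.e., for every r > 0, sup_{x ∈ ℝ^d} βₙ(B_r(x)) → 0 as n → ∞. Then for every bounded continuous function h : ℝ^d → ℝ vanishing at infinity, ∫∫ h(x - y) βₙ(dx) βₙ(dy) → 0 as n → ∞. -/

import Mathlib

open MeasureTheory Filter Metric
open scoped Topology ENNReal

/-!
Since `h` vanishes at infinity, `|h (x - y)| ≤ ε` for `y` outside a ball `B_r(x)` with `r` large,
while inside the ball it is at most `C = sup |h|`. So the inner integral is at most
`C · sup_x βₙ(B_r(x)) + ε` for every `x`, and total disintegration makes the first term small.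
-/

section

variable {α E : Type*} [MeasurableSpace α] [NormedAddCommGroup E] [NormedSpace ℝ E]

lemma norm_integral_le_of_norm_le_indicator_add {μ : Measure α} [IsFiniteMeasure μ]
    {f : α → E} {s : Set α} (hs : MeasurableSet s) {C ε : ℝ}
    (hf : ∀ x, ‖f x‖ ≤ s.indicator (fun _ => C) x + ε) :
    ‖∫ x, f x ∂μ‖ ≤ C * μ.real s + ε * μ.real Set.univ := by
  have hint : Integrable (fun x => s.indicator (fun _ => C) x + ε) μ :=
    ((integrable_const C).indicator hs).add (integrable_const ε)
  calc ‖∫ x, f x ∂μ‖ ≤ ∫ x, (s.indicator (fun _ => C) x + ε) ∂μ :=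
        norm_integral_le_of_norm_le hint (.of_forall hf)
    _ = C * μ.real s + ε * μ.real Set.univ := by
        rw [integral_add ((integrable_const C).indicator hs) (integrable_const ε),
          integral_indicator_const C hs, integral_const, smul_eq_mul, smul_eq_mul,
          mul_comm C, mul_comm ε]

end

lemma exists_forall_norm_le_of_tendsto_cobounded {G F : Type*} [NormedAddCommGroup G]
    [NormedAddCommGroup F] {h : G → F} (hh : Tendsto h (Bornology.cobounded G) (𝓝 0))
    {ε : ℝ} (hε : 0 < ε) : ∃ r > 0, ∀ z, r ≤ ‖z‖ → ‖h z‖ ≤ ε := by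
  rw [← comap_norm_atTop] at hh
  obtain ⟨r, -, hr⟩ := (atTop_basis.comap norm).eventually_iff.1
    (hh.norm.eventually (ge_mem_nhds (norm_zero (E := F) ▸ hε)))
  exact ⟨max r 1, by positivity, fun z hz => hr ((le_max_left r 1).trans hz)⟩

section

variable {G F : Type*} [NormedAddCommGroup G] [MeasurableSpace G] [OpensMeasurableSpace G]
  [NormedAddCommGroup F] [NormedSpace ℝ F] {μ : Measure G} [IsFiniteMeasure μ] {h : G → F}
  {C ε r : ℝ}

lemma norm_integral_comp_sub_le (hC : ∀ z, ‖h z‖ ≤ C) (hε : 0 ≤ ε)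
    (hr : ∀ z, r ≤ ‖z‖ → ‖h z‖ ≤ ε) (x : G) :
    ‖∫ y, h (x - y) ∂μ‖ ≤ C * μ.real (ball x r) + ε * μ.real Set.univ := by
  refine norm_integral_le_of_norm_le_indicator_add measurableSet_ball fun y => ?_
  by_cases hy : y ∈ ball x r
  · rw [Set.indicator_of_mem hy]
    linarith [hC (x - y)]
  · rw [Set.indicator_of_notMem hy, zero_add]
    exact hr _ (by simpa [mem_ball, dist_eq_norm', not_lt] using hy)

lemma norm_integral_integral_comp_sub_le (hμ : μ Set.univ ≤ 1) (hC : ∀ z, ‖h z‖ ≤ C)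
    (hε : 0 ≤ ε) (hr : ∀ z, r ≤ ‖z‖ → ‖h z‖ ≤ ε) :
    ‖∫ x, ∫ y, h (x - y) ∂μ ∂μ‖ ≤ C * (⨆ x, μ.real (ball x r)) + ε := by
  have hC0 : 0 ≤ C := (norm_nonneg _).trans (hC 0)
  have hmass : μ.real Set.univ ≤ 1 := ENNReal.toReal_le_of_le_ofReal zero_le_one (by simpa using hμ)
  have hball : ∀ x, μ.real (ball x r) ≤ ⨆ x, μ.real (ball x r) :=
    le_ciSup ⟨μ.real Set.univ, by rintro _ ⟨x, rfl⟩; exact measureReal_mono (Set.subset_univ _)⟩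
  have hinner : ∀ x, ‖∫ y, h (x - y) ∂μ‖ ≤ C * (⨆ x, μ.real (ball x r)) + ε := fun x =>
    (norm_integral_comp_sub_le hC hε hr x).trans <| add_le_add
      (mul_le_mul_of_nonneg_left (hball x) hC0)
      (mul_le_of_le_one_right hε hmass)
  have hbound_nonneg : 0 ≤ C * (⨆ x, μ.real (ball x r)) + ε :=
    (norm_nonneg _).trans (hinner 0)
  calc ‖∫ x, ∫ y, h (x - y) ∂μ ∂μ‖ ≤ (C * (⨆ x, μ.real (ball x r)) + ε) * μ.real Set.univ :=
        norm_integral_le_of_norm_le_const (.of_forall hinner)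
    _ ≤ C * (⨆ x, μ.real (ball x r)) + ε := mul_le_of_le_one_right hbound_nonneg hmass

end

def TotallyDisintegrates {ι X : Type*} [PseudoMetricSpace X] [MeasurableSpace X]
    (μ : ι → Measure X) (l : Filter ι) : Prop :=
  ∀ r : ℝ, 0 < r → Tendsto (fun i => ⨆ x, (μ i).real (ball x r)) l (𝓝 0)

theorem TotallyDisintegrates.tendsto_integral_integral_comp_sub {ι G F : Type*}
    [NormedAddCommGroup G] [MeasurableSpace G] [OpensMeasurableSpace G] [NormedAddCommGroup F]
    [NormedSpace ℝ F] {l : Filter ι} {μ : ι → Measure G} (hdis : TotallyDisintegrates μ l)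
    (hμ : ∀ i, μ i Set.univ ≤ 1) {h : G → F} {C : ℝ} (hC : ∀ z, ‖h z‖ ≤ C)
    (hh : Tendsto h (Bornology.cobounded G) (𝓝 0)) :
    Tendsto (fun i => ∫ x, ∫ y, h (x - y) ∂μ i ∂μ i) l (𝓝 0) := by
  have (i : ι) : IsFiniteMeasure (μ i) := ⟨(hμ i).trans_lt ENNReal.one_lt_top⟩
  refine Metric.tendsto_nhds.2 fun ε hε => ?_
  obtain ⟨r, hr0, hr⟩ := exists_forall_norm_le_of_tendsto_cobounded hh (half_pos hε)
  have hsmall : ∀ᶠ i in l, C * ⨆ x, (μ i).real (ball x r) < ε / 2 := by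
    simpa using ((hdis r hr0).const_mul C).eventually (gt_mem_nhds (by simpa using half_pos hε))
  filter_upwards [hsmall] with i hi
  rw [dist_zero_right]
  linarith [norm_integral_integral_comp_sub_le (hμ i) hC (half_pos hε).le hr]

theorem gmc_total_disintegration_general (d : ℕ)
    (B : ℕ → Measure (EuclideanSpace ℝ (Fin d)))
    (hsub : ∀ n, B n Set.univ ≤ 1)
    (hdis : ∀ r : ℝ, 0 < r →
      Tendsto (fun n => ⨆ x : EuclideanSpace ℝ (Fin d),
        ((B n) (Metric.ball x r)).toReal) atTop (𝓝 0))
    (h : EuclideanSpace ℝ (Fin d) → ℝ)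
    (hb : ∃ C : ℝ, ∀ z, |h z| ≤ C)
    (hvanish : Tendsto h (cocompact (EuclideanSpace ℝ (Fin d))) (𝓝 0)) :
    Tendsto (fun n => ∫ x, ∫ y, h (x - y) ∂(B n) ∂(B n)) atTop (𝓝 0) := by
  obtain ⟨C, hC⟩ := hb
  rw [← Metric.cobounded_eq_cocompact] at hvanish
  exact TotallyDisintegrates.tendsto_integral_integral_comp_sub hdis hsub
    (fun z => (Real.norm_eq_abs _).trans_le (hC z)) hvanish

/-- if a sequence of subprobability measures totally disintegrates, then
for every bounded continuous `h` vanishing at infinity the double integral of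
`h (x - y)` tends to `0`. -/
theorem gmc_total_disintegration (d : ℕ)
    (B : ℕ → Measure (EuclideanSpace ℝ (Fin d))) [∀ n, IsFiniteMeasure (B n)]
    (hsub : ∀ n, B n Set.univ ≤ 1)
    (hdis : ∀ r : ℝ, 0 < r →
      Tendsto (fun n => ⨆ x : EuclideanSpace ℝ (Fin d),
        ((B n) (Metric.ball x r)).toReal) atTop (𝓝 0))
    (h : EuclideanSpace ℝ (Fin d) → ℝ) (hc : Continuous h)
    (hb : ∃ C : ℝ, ∀ z, |h z| ≤ C)
    (hvanish : Tendsto h (cocompact (EuclideanSpace ℝ (Fin d))) (𝓝 0)) :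
    Tendsto (fun n => ∫ x, ∫ y, h (x - y) ∂(B n) ∂(B n)) atTop (𝓝 0) :=
  gmc_total_disintegration_general d B hsub hdis h hb hvanish
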